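/- arXiv:1703.04555 — 3 statements merged into one kernel-verified Lean document; each statement's English description precedes it below -/
import Mathlib

section
/- If a bounded self-adjoint positive operator T on a Hilbert space satisfies ⟨T²ξ, ξ⟩ ≥ ε⟨Tξ, ξ⟩ for all ξ and some ε > 0, then the spectrum of T is contained in {0} ∪ [ε, ∞); in particular, on the orthogonal complement of the kernel of T, one has ⟨Tξ, ξ⟩ ≥ ε⟨ξ, ξ⟩. -/
open scoped InnerProductSpace

/-!
Each `μ ∈ σ(T)` satisfies `μ ≥ 0` and, by spectral mapping applied to the positive operator
`T² - εT`, also `μ² - εμ ≥ 0`; hence `μ = 0` or `μ ≥ ε`. Since `T` and `T² - εT` are commuting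
positive operators, their product is positive, which says `ε‖Tη‖² ≤ ⟪T (Tη), Tη⟫`: the desired
form inequality holds on the range of `T`, hence on its closure `(ker T)ᗮ`.
-/

theorem re_inner_sub_real_smul_left {E : Type*} [NormedAddCommGroup E] [InnerProductSpace ℂ E]
    (x y z : E) (ε : ℝ) : (⟪x - ε • y, z⟫_ℂ).re = (⟪x, z⟫_ℂ).re - ε * (⟪y, z⟫_ℂ).re := by
  rw [inner_sub_left, RCLike.real_smul_eq_coe_smul (K := ℂ), inner_smul_real_left]
  simp

theorem spectrum_subset_of_sq_sub_smul_nonneg {A : Type*} [Ring A] [PartialOrder A] [StarRing A]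
    [StarOrderedRing A] [TopologicalSpace A] [Algebra ℝ A]
    [ContinuousFunctionalCalculus ℝ A IsSelfAdjoint] [NonnegSpectrumClass ℝ A]
    {a : A} {ε : ℝ} (ha : 0 ≤ a) (h : 0 ≤ a ^ 2 - ε • a) :
    spectrum ℝ a ⊆ {0} ∪ Set.Ici ε := by
  intro μ hμ
  have hcfc : cfc (fun x : ℝ => x ^ 2 - ε * x) a = a ^ 2 - ε • a := by
    rw [cfc_sub _ _ a (by fun_prop) (by fun_prop), cfc_pow_id a 2, cfc_const_mul_id ε a]
  have hmem : μ ^ 2 - ε * μ ∈ spectrum ℝ (a ^ 2 - ε • a) := by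
    rw [← hcfc, cfc_map_spectrum (fun x : ℝ => x ^ 2 - ε * x) a]
    exact ⟨μ, hμ, rfl⟩
  have hgap : 0 ≤ μ * (μ - ε) := by
    linarith [spectrum_nonneg_of_nonneg h hmem]
  rcases (spectrum_nonneg_of_nonneg ha hμ).eq_or_lt with rfl | hμ_pos
  · exact Or.inl rfl
  · exact Or.inr (sub_nonneg.mp (nonneg_of_mul_nonneg_right hgap hμ_pos))

namespace ContinuousLinearMap

theorem forall_mem_orthogonal_ker_of_forall_apply {𝕜 E : Type*} [RCLike 𝕜]
    [NormedAddCommGroup E] [InnerProductSpace 𝕜 E] [CompleteSpace E] {T : E →L[𝕜] E}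
    (hT : IsSelfAdjoint T) {p : E → Prop} (hp : IsClosed {x | p x}) (h : ∀ x, p (T x)) :
    ∀ x ∈ T.kerᗮ, p x := by
  rw [orthogonal_ker, hT.adjoint_eq]
  exact fun x hx => closure_minimal (by rintro _ ⟨y, rfl⟩; exact h y) hp hx

variable {E : Type*} [NormedAddCommGroup E] [InnerProductSpace ℂ E] [CompleteSpace E]

theorem sq_sub_smul_nonneg {T : E →L[ℂ] E} (hT : IsSelfAdjoint T) {ε : ℝ}
    (h : ∀ x, ε * (⟪T x, x⟫_ℂ).re ≤ (⟪T (T x), x⟫_ℂ).re) : 0 ≤ T ^ 2 - ε • T := by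
  refine (nonneg_iff_isPositive _).mpr
    ⟨((hT.pow 2).sub ((IsSelfAdjoint.all ε).smul hT)).isSymmetric, fun x => ?_⟩
  rw [reApplyInnerSelf_apply, RCLike.re_to_complex]
  simp only [sq, sub_apply, mul_apply_eq_comp, smul_apply, re_inner_sub_real_smul_left]
  linarith [h x]

theorem re_inner_mul_sq_sub_smul_apply_self {T : E →L[ℂ] E} (hT : IsSelfAdjoint T) (ε : ℝ)
    (x : E) :
    (⟪(T * (T ^ 2 - ε • T)) x, x⟫_ℂ).re = (⟪T (T x), T x⟫_ℂ).re - ε * ‖T x‖ ^ 2 := by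
  rw [mul_apply_eq_comp, ← adjoint_inner_right, hT.adjoint_eq]
  simp only [sq, sub_apply, mul_apply_eq_comp, smul_apply, re_inner_sub_real_smul_left,
    inner_self_eq_norm_sq_to_K]
  simp

end ContinuousLinearMap

open ContinuousLinearMap in
theorem spectrum_subset_of_quadratic_gap_general
    {H : Type*} [NormedAddCommGroup H] [InnerProductSpace ℂ H] [CompleteSpace H]
    (T : H →L[ℂ] H) (hsa : IsSelfAdjoint T)
    (hpos : ∀ ξ : H, 0 ≤ (⟪T ξ, ξ⟫_ℂ).re)
    (ε : ℝ)
    (hgap : ∀ ξ : H, ε * (⟪T ξ, ξ⟫_ℂ).re ≤ (⟪T (T ξ), ξ⟫_ℂ).re) :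
    spectrum ℝ T ⊆ {0} ∪ Set.Ici ε ∧
    ∀ ξ ∈ (LinearMap.ker (T : H →ₗ[ℂ] H))ᗮ, ε * ‖ξ‖ ^ 2 ≤ (⟪T ξ, ξ⟫_ℂ).re := by
  have hT : 0 ≤ T := (nonneg_iff_isPositive T).mpr ⟨hsa.isSymmetric, hpos⟩
  have hS : 0 ≤ T ^ 2 - ε • T := sq_sub_smul_nonneg hsa hgap
  refine ⟨spectrum_subset_of_sq_sub_smul_nonneg hT hS, ?_⟩
  have hcomm : Commute T (T ^ 2 - ε • T) :=
    ((Commute.refl T).pow_right 2).sub_right ((Commute.refl T).smul_right ε)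
  refine forall_mem_orthogonal_ker_of_forall_apply hsa (isClosed_le (by fun_prop) (by fun_prop))
    fun x => sub_nonneg.mp ?_
  rw [← re_inner_mul_sq_sub_smul_apply_self hsa]
  exact ((nonneg_iff_isPositive _).mp (hcomm.mul_nonneg hT hS)).2 x

/-- If a bounded self-adjoint positive operator `T` on a complex Hilbert
space satisfies `⟨T²ξ, ξ⟩ ≥ ε⟨Tξ, ξ⟩` for all `ξ` and some `ε > 0`, then the spectrum of
`T` is contained in `{0} ∪ [ε, ∞)`; in particular on the orthogonal complement of the
kernel of `T` one has `⟨Tξ, ξ⟩ ≥ ε⟨ξ, ξ⟩`. -/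
theorem spectrum_subset_of_quadratic_gap
    {H : Type*} [NormedAddCommGroup H] [InnerProductSpace ℂ H] [CompleteSpace H]
    (T : H →L[ℂ] H) (hsa : IsSelfAdjoint T)
    (hpos : ∀ ξ : H, 0 ≤ (⟪T ξ, ξ⟫_ℂ).re)
    (ε : ℝ) (hε : 0 < ε)
    (hgap : ∀ ξ : H, ε * (⟪T ξ, ξ⟫_ℂ).re ≤ (⟪T (T ξ), ξ⟫_ℂ).re) :
    spectrum ℝ T ⊆ {0} ∪ Set.Ici ε ∧
    ∀ ξ ∈ (LinearMap.ker (T : H →ₗ[ℂ] H))ᗮ, ε * ‖ξ‖ ^ 2 ≤ (⟪T ξ, ξ⟫_ℂ).re :=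
  spectrum_subset_of_quadratic_gap_general T hsa hpos ε hgap
end

section
/- Let m ≥ 2, n ≥ 2, ζ = exp(2πi/(2m)), and define η = (1, ζ, ζ + ζ|1−ζ|, …, ζ + ζ|1−ζ|(n−2)) ∈ ℂⁿ. Then ‖η‖² = 2 + ∑_{j=1}^{n−2} |1 + |1−ζ| j|², and for every generator s in the standard generating set S of the complex reflection group G(m,m,n), ‖s·η − η‖² = 2|1−ζ|². -/
open Finset Complex

/-- The monomial matrix `[(a₁,…,a_n), σ]` whose `(i, σ(i))` entry is `a i`. -/
def monomialMat {n : ℕ} (a : Fin n → ℂ) (σ : Equiv.Perm (Fin n)) :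
    Matrix (Fin n) (Fin n) ℂ :=
  Matrix.of fun i j => if j = σ i then a i else 0

/-- The standard generating set of `G(m,m,n)` as a set of `n×n` complex matrices:
the adjacent transposition matrices and `[(ζ_m⁻¹, ζ_m, 1,…,1), (1,2)]`. -/
noncomputable def genSetGmmn (m n : ℕ) : Set (Matrix (Fin n) (Fin n) ℂ) :=
  {A | (∃ (i : ℕ) (h : i + 1 < n),
          A = monomialMat (fun _ => 1)
                (Equiv.swap ⟨i, Nat.lt_of_succ_lt h⟩ ⟨i + 1, h⟩)) ∨
       (∃ h : 1 < n,
          A = monomialMat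
                (fun k => if (k : ℕ) = 0 then (Complex.exp (2 * Real.pi * I / m))⁻¹
                  else if (k : ℕ) = 1 then Complex.exp (2 * Real.pi * I / m) else 1)
                (Equiv.swap ⟨0, Nat.lt_of_succ_lt h⟩ ⟨1, h⟩))}

/-- The witness vector `η = (1, ζ, ζ + ζ|1−ζ|, …, ζ + ζ|1−ζ|(n−2))` with `ζ = ζ_{2m}`. -/
noncomputable def etaVec (m n : ℕ) : Fin n → ℂ :=
  fun j =>
    let ζ : ℂ := Complex.exp (2 * Real.pi * I / (2 * m))
    if (j : ℕ) = 0 then 1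
    else ζ + ζ * (Norm.norm (1 - ζ) : ℂ) * (((j : ℕ) - 1 : ℕ) : ℂ)

/-!
The adjacent coordinates of `η` differ by `ζ - 1` and then by `ζ |1 - ζ|`, both of norm `|1 - ζ|`
since `|ζ| = 1`. A transposition `(i, i+1)` only moves two coordinates, each by an adjacent
difference of `η`. The last generator has `ζ_m = ζ²`, so it moves `η₀ = 1` and `η₁ = ζ` by
`ζ⁻¹ - 1 = ζ⁻¹(1 - ζ)` and `ζ² - ζ = ζ(ζ - 1)`, again of norm `|1 - ζ|`.
-/

lemma monomialMat_mulVec {n : ℕ} (a : Fin n → ℂ) (σ : Equiv.Perm (Fin n)) (v : Fin n → ℂ)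
    (i : Fin n) : (monomialMat a σ).mulVec v i = a i * v (σ i) := by
  simp only [monomialMat, Matrix.mulVec, dotProduct, Matrix.of_apply, ite_mul, zero_mul,
    Finset.sum_ite_eq', Finset.mem_univ, if_true]

lemma sum_norm_sq_monomialMat_swap_mulVec_sub {n : ℕ} (a : Fin n → ℂ) {i j : Fin n}
    (hij : i ≠ j) (ha : ∀ k, k ≠ i → k ≠ j → a k = 1) (v : Fin n → ℂ) :
    ∑ k, ‖((monomialMat a (Equiv.swap i j)).mulVec v - v) k‖ ^ 2
      = ‖a i * v j - v i‖ ^ 2 + ‖a j * v i - v j‖ ^ 2 := by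
  rw [Fintype.sum_eq_add i j hij]
  · simp [monomialMat_mulVec]
  · rintro k ⟨hki, hkj⟩
    simp [monomialMat_mulVec, Equiv.swap_apply_of_ne_of_ne hki hkj, ha k hki hkj]

lemma norm_exp_two_pi_I_div_ofReal (x : ℝ) : ‖exp (2 * Real.pi * I / x)‖ = 1 := by
  rw [mul_div_right_comm, ← ofReal_ofNat, ← ofReal_mul, ← ofReal_div, norm_exp_ofReal_mul_I]

lemma exp_two_pi_I_div_two_mul_sq (x : ℂ) :
    exp (2 * Real.pi * I / (2 * x)) ^ 2 = exp (2 * Real.pi * I / x) := by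
  rw [← exp_nat_mul, Nat.cast_ofNat, ← mul_div_assoc, mul_div_mul_left _ _ two_ne_zero]

noncomputable def etaSeq (ζ : ℂ) (j : ℕ) : ℂ :=
  if j = 0 then 1 else ζ + ζ * (‖1 - ζ‖ : ℂ) * ((j - 1 : ℕ) : ℂ)

lemma etaVec_eq_etaSeq (m n : ℕ) :
    etaVec m n = fun j : Fin n => etaSeq (exp (2 * Real.pi * I / (2 * m))) j := rfl

namespace etaSeq

variable {ζ : ℂ}

lemma zero : etaSeq ζ 0 = 1 := rfl

lemma one : etaSeq ζ 1 = ζ := by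
  simp [etaSeq]

lemma succ (k : ℕ) : etaSeq ζ (k + 1) = ζ * (1 + ‖1 - ζ‖ * k) := by
  simp only [etaSeq, Nat.add_one_ne_zero, if_false, Nat.add_sub_cancel]
  ring

lemma norm_succ (hζ : ‖ζ‖ = 1) (k : ℕ) : ‖etaSeq ζ (k + 1)‖ = ‖1 + ‖1 - ζ‖ * (k : ℂ)‖ := by
  rw [succ, norm_mul, hζ, one_mul]

lemma norm_succ_sub (hζ : ‖ζ‖ = 1) (k : ℕ) :
    ‖etaSeq ζ (k + 1) - etaSeq ζ k‖ = ‖1 - ζ‖ := by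
  rcases k with _ | k
  · rw [succ, zero, Nat.cast_zero, mul_zero, add_zero, mul_one, norm_sub_rev]
  · have hdiff : etaSeq ζ (k + 1 + 1) - etaSeq ζ (k + 1) = ζ * (‖1 - ζ‖ : ℂ) := by
      rw [succ, succ]; push_cast; ring
    rw [hdiff, norm_mul, hζ, one_mul, norm_real, norm_norm]

lemma sum_range_norm_sq (hζ : ‖ζ‖ = 1) (k : ℕ) :
    ∑ j ∈ range (k + 2), ‖etaSeq ζ j‖ ^ 2
      = 2 + ∑ j ∈ Icc 1 k, ‖1 + ‖1 - ζ‖ * (j : ℂ)‖ ^ 2 := by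
  have hIcc : ∑ j ∈ Icc 1 k, ‖1 + ‖1 - ζ‖ * (j : ℂ)‖ ^ 2
      = ∑ i ∈ range k, ‖1 + ‖1 - ζ‖ * ((i + 1 : ℕ) : ℂ)‖ ^ 2 := by
    rw [range_eq_Ico, sum_Ico_add' (f := fun j : ℕ => ‖1 + ‖1 - ζ‖ * (j : ℂ)‖ ^ 2)]
    rfl
  rw [hIcc, sum_range_succ', sum_range_succ', zero]
  simp only [norm_succ hζ, Nat.cast_zero, mul_zero, add_zero, norm_one, one_pow]
  ring

end etaSeq

theorem etaVec_norms_general (m n : ℕ) (hn : 2 ≤ n) :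
    (∑ j : Fin n, Norm.norm (etaVec m n j) ^ 2
        = 2 + ∑ j ∈ Finset.Icc 1 (n - 2),
            Norm.norm (1 + (Norm.norm (1 - Complex.exp (2 * Real.pi * I / (2 * m))) : ℂ)
              * (j : ℂ)) ^ 2) ∧
    (∀ A ∈ genSetGmmn m n,
      ∑ j : Fin n, Norm.norm ((A.mulVec (etaVec m n) - etaVec m n) j) ^ 2
        = 2 * Norm.norm (1 - Complex.exp (2 * Real.pi * I / (2 * m))) ^ 2) := by
  rw [etaVec_eq_etaSeq]
  set ζ := exp (2 * Real.pi * I / (2 * m))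
  have hζ : ‖ζ‖ = 1 := by simpa using norm_exp_two_pi_I_div_ofReal (2 * m)
  refine ⟨?_, ?_⟩
  · obtain ⟨k, rfl⟩ : ∃ k, n = k + 2 := ⟨n - 2, by omega⟩
    rw [Fin.sum_univ_eq_sum_range (fun j => ‖etaSeq ζ j‖ ^ 2), etaSeq.sum_range_norm_sq hζ,
      Nat.add_sub_cancel]
  rintro A (⟨i, hi, rfl⟩ | ⟨hn, rfl⟩)
  · rw [sum_norm_sq_monomialMat_swap_mulVec_sub _ (by simp [Fin.ext_iff]) (fun _ _ _ => rfl),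
      one_mul, one_mul, norm_sub_rev (etaSeq ζ i), etaSeq.norm_succ_sub hζ]
    ring
  · rw [sum_norm_sq_monomialMat_swap_mulVec_sub _ (by simp [Fin.ext_iff])
      (fun k hk0 hk1 => by simp_all [Fin.ext_iff])]
    have hζm : exp (2 * Real.pi * I / m) = ζ ^ 2 := (exp_two_pi_I_div_two_mul_sq _).symm
    have hζ0 : ζ ≠ 0 := exp_ne_zero _
    have h0 : (ζ ^ 2)⁻¹ * ζ - 1 = ζ⁻¹ * (1 - ζ) := by field_simp
    have h1 : ζ ^ 2 * 1 - ζ = -(ζ * (1 - ζ)) := by ring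
    simp only [hζm, if_true, one_ne_zero, if_false, etaSeq.zero, etaSeq.one]
    rw [h0, h1, norm_neg, norm_mul, norm_mul, norm_inv, hζ, inv_one, one_mul]
    ring

/-- Let `m ≥ 2`, `n ≥ 2`, `ζ = exp(2πi/(2m))` and
`η = (1, ζ, ζ + ζ|1−ζ|, …, ζ + ζ|1−ζ|(n−2)) ∈ ℂⁿ`. Then
`‖η‖² = 2 + ∑_{j=1}^{n−2} |1 + |1−ζ| j|²` and for every generator `s` in the standard
generating set `S` of `G(m,m,n)`, `‖s·η − η‖² = 2|1−ζ|²`. -/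
theorem etaVec_norms (m n : ℕ) (hm : 2 ≤ m) (hn : 2 ≤ n) :
    (∑ j : Fin n, Norm.norm (etaVec m n j) ^ 2
        = 2 + ∑ j ∈ Finset.Icc 1 (n - 2),
            Norm.norm (1 + (Norm.norm (1 - Complex.exp (2 * Real.pi * I / (2 * m))) : ℂ)
              * (j : ℂ)) ^ 2) ∧
    (∀ A ∈ genSetGmmn m n,
      ∑ j : Fin n, Norm.norm ((A.mulVec (etaVec m n) - etaVec m n) j) ^ 2
        = 2 * Norm.norm (1 - Complex.exp (2 * Real.pi * I / (2 * m))) ^ 2) :=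
  etaVec_norms_general m n hn
end

section
/- For the dihedral group I₂(n) of order 2n (n ≥ 3) with its two standard Coxeter generators s, t, the Kazhdan constant is κ(I₂(n), {s,t}) = 2 sin(π/(2n)). -/
/-- The Kazhdan constant `κ(G,S)`: the infimum, over all unitary representations `π`
without non-zero invariant vectors and all unit vectors `ξ`, of
`sup_{s ∈ S} ‖π(s)ξ − ξ‖`. -/
noncomputable def kazhdanConstant (G : Type*) [Group G] (S : Set G) : ℝ :=
  sInf {r | ∃ (H : Type) (_ : NormedAddCommGroup H) (_ : InnerProductSpace ℂ H)
      (π : G →* (H ≃ₗᵢ[ℂ] H)),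
      (∀ ξ : H, (∀ g : G, π g ξ = ξ) → ξ = 0) ∧
      ∃ ξ : H, ‖ξ‖ = 1 ∧ r = ⨆ s ∈ S, ‖π s ξ - ξ‖}

/-!
Write `s = sr 0`, `t = sr 1`, so that `s * t = r 1`. In a unitary representation `ρ`, the rotation
`ρ (r 1)` has order `n`, so `H` is the orthogonal sum of its eigenspaces, with eigenvalues the
`n`-th roots of unity. On the eigenspace for `1` (the rotation-invariant vectors) `s` and `t` act
by `-1`, because for such `v` the vector `v + s v` is invariant. On its orthogonal complement the
eigenvalues `e^{2πik/n}` with `k ≠ 0` give `Re ⟪x, r x⟫ ≤ cos (2π/n) ‖x‖²`. Since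
`‖s x + t x‖² = 2‖x‖² + 2 Re ⟪x, r x⟫`, this means `‖s x + t x‖ ≤ 2 cos (π/n) ‖x‖` there.
Combining the two parts, `Re ⟪s ξ, ξ⟫ + Re ⟪t ξ, ξ⟫ ≤ 2 cos (π/n)` for a unit vector `ξ`, so
`‖s ξ - ξ‖² + ‖t ξ - ξ‖² ≥ 4 - 4 cos (π/n) = 2 (2 sin (π/2n))²`.

The bound is attained in the two-dimensional representation `r j ↦ diag(ζ^j, ζ^{-j})`,
`sr j ↦ antidiag(ζ^{-j}, ζ^j)` with `ζ = e^{2πi/n}`. There the vector `(1, e^{iπ/n})/√2` is moved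
by `s` and by `t` through distances `|e^{±iπ/n} - 1| = 2 sin (π/2n)`.
-/

open Complex Real Finset DihedralGroup
open ZMod (stdAddChar)
open scoped InnerProductSpace

theorem LinearIsometryEquiv.mul_apply {R E : Type*} [Semiring R] [SeminormedAddCommGroup E]
    [Module R E] (e e' : E ≃ₗᵢ[R] E) (x : E) : (e * e') x = e (e' x) :=
  rfl

lemma Real.cos_le_cos_of_mem_Icc {a x : ℝ} (ha : 0 ≤ a) (hx : x ∈ Set.Icc a (2 * π - a)) :
    Real.cos x ≤ Real.cos a := by
  obtain ⟨hax, hxa⟩ := hx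
  rcases le_total x π with hxπ | hπx
  · exact Real.cos_le_cos_of_nonneg_of_le_pi ha hxπ hax
  · rw [← Real.cos_two_pi_sub x]
    exact Real.cos_le_cos_of_nonneg_of_le_pi ha (by linarith) (by linarith)

lemma ZMod.re_stdAddChar_le {n : ℕ} [NeZero n] {k : ZMod n} (hk : k ≠ 0) :
    (stdAddChar k).re ≤ Real.cos (2 * π / n) := by
  have hn : (0 : ℝ) < n := by exact_mod_cast Nat.pos_of_ne_zero (NeZero.ne n)
  have h1 : (1 : ℝ) ≤ k.val := by
    exact_mod_cast Nat.one_le_iff_ne_zero.mpr ((ZMod.val_ne_zero k).mpr hk)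
  have h2 : (k.val : ℝ) + 1 ≤ n := by exact_mod_cast ZMod.val_lt k
  rw [stdAddChar_apply, toCircle_apply,
    show 2 * π * I * k.val / n = ((2 * π * k.val / n : ℝ) : ℂ) * I by push_cast; ring,
    exp_ofReal_mul_I_re]
  refine Real.cos_le_cos_of_mem_Icc (by positivity) ⟨?_, ?_⟩
  · rw [div_le_div_iff_of_pos_right hn]; nlinarith [Real.pi_pos]
  · rw [div_le_iff₀ hn, sub_mul, div_mul_cancel₀ _ hn.ne']
    nlinarith [Real.pi_pos]

lemma Real.sin_pi_div_two_mul_nonneg (n : ℕ) : 0 ≤ Real.sin (π / (2 * n)) := by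
  rcases Nat.eq_zero_or_pos n with rfl | hn
  · simp
  refine Real.sin_nonneg_of_nonneg_of_le_pi (by positivity) (div_le_self pi_pos.le ?_)
  have : (1 : ℝ) ≤ n := by exact_mod_cast hn
  linarith

lemma Complex.norm_exp_I_mul_sub_one_of_abs_eq {n : ℕ} {x : ℝ} (hx : |x| = π / n) :
    ‖exp (I * x) - 1‖ = 2 * Real.sin (π / (2 * n)) := by
  have hsin := Real.sin_pi_div_two_mul_nonneg n
  rw [norm_exp_I_mul_ofReal_sub_one, norm_mul, Real.norm_two, Real.norm_eq_abs]
  rcases abs_eq (by positivity) |>.mp hx with rfl | rfl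
  · rw [div_div, mul_comm (n : ℝ), abs_of_nonneg hsin]
  · rw [neg_div, Real.sin_neg, abs_neg, div_div, mul_comm (n : ℝ), abs_of_nonneg hsin]

lemma inner_sum_sum_smul_of_pairwise {ι H : Type*} [Fintype ι] [NormedAddCommGroup H]
    [InnerProductSpace ℂ H] {v : ι → H} (hv : Pairwise fun i j => ⟪v i, v j⟫_ℂ = 0) (a : ι → ℂ) :
    ⟪∑ i, v i, ∑ i, a i • v i⟫_ℂ = ∑ i, a i * (‖v i‖ ^ 2 : ℝ) := by
  simp only [sum_inner, inner_sum, inner_smul_right]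
  refine sum_congr rfl fun i _ => ?_
  rw [sum_eq_single i (fun j _ hji => by simp [hv hji]) (by simp),
    inner_self_eq_norm_sq_to_K]
  push_cast; rfl

section FourierComponent

variable {n : ℕ} [NeZero n] {H : Type*} [NormedAddCommGroup H] [InnerProductSpace ℂ H]
  (ρ : Multiplicative (ZMod n) →* (H ≃ₗᵢ[ℂ] H))

noncomputable def fourierComponent (x : H) (k : ZMod n) : H :=
  (n : ℂ)⁻¹ • ∑ j : ZMod n, stdAddChar (-(k * j)) • ρ (.ofAdd j) x

lemma map_fourierComponent (x : H) (i k : ZMod n) :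
    ρ (.ofAdd i) (fourierComponent ρ x k) = stdAddChar (k * i) • fourierComponent ρ x k := by
  have shift : ∑ j, stdAddChar (-(k * j)) • ρ (.ofAdd (i + j)) x
      = ∑ j, stdAddChar (k * i + -(k * j)) • ρ (.ofAdd j) x :=
    Fintype.sum_equiv (Equiv.addLeft i) _ _ fun j => by
      simp only [Equiv.coe_addLeft]; congr 2; ring
  simp only [fourierComponent, _root_.map_smul, map_sum, ← LinearIsometryEquiv.mul_apply,
    ← map_mul, ← ofAdd_add, shift, AddChar.map_add_eq_mul, mul_smul, ← smul_sum]
  exact smul_comm _ _ _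

lemma sum_fourierComponent (x : H) : ∑ k, fourierComponent ρ x k = x := by
  classical
  have orth (j : ZMod n) : ∑ k : ZMod n, stdAddChar (-(k * j)) = if j = 0 then (n : ℂ) else 0 := by
    simp_rw [← mul_neg, AddChar.sum_mulShift _ (ZMod.isPrimitive_stdAddChar n), neg_eq_zero,
      ZMod.card, apply_ite (Nat.cast : ℕ → ℂ), Nat.cast_zero]
  simp only [fourierComponent, ← smul_sum]
  rw [sum_comm]
  simp only [← sum_smul, orth, ite_smul, zero_smul, sum_ite_eq', mem_univ, if_true, ofAdd_zero,
    map_one, LinearIsometryEquiv.coe_one, id]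
  exact inv_smul_smul₀ (Nat.cast_ne_zero.mpr (NeZero.ne n)) x

lemma inner_fourierComponent_eq_zero (x : H) {k l : ZMod n} (hkl : k ≠ l) :
    ⟪fourierComponent ρ x k, fourierComponent ρ x l⟫_ℂ = 0 := by
  have h := (ρ (.ofAdd 1)).inner_map_map (fourierComponent ρ x k) (fourierComponent ρ x l)
  rw [map_fourierComponent, map_fourierComponent, inner_smul_left, inner_smul_right,
    mul_one, mul_one, ← mul_assoc] at h
  have hne : (starRingEnd ℂ) (stdAddChar k) * stdAddChar l ≠ 1 := by
    rw [← AddChar.map_neg_eq_conj, ← AddChar.map_add_eq_mul,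
      ← AddChar.map_zero_eq_one (stdAddChar (N := n)), ZMod.injective_stdAddChar.ne_iff,
      neg_add_eq_sub]
    exact sub_ne_zero.mpr hkl.symm
  by_contra hz
  exact hne ((mul_eq_right₀ hz).mp h)

lemma map_fourierComponent_zero (x : H) (g : Multiplicative (ZMod n)) :
    ρ g (fourierComponent ρ x 0) = fourierComponent ρ x 0 := by
  simpa using map_fourierComponent ρ x g.toAdd 0

lemma inner_fourierComponent_zero_right {v : H} (hv : ∀ g, ρ g v = v) (x : H) :
    ⟪v, fourierComponent ρ x 0⟫_ℂ = ⟪v, x⟫_ℂ := by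
  have h (j : ZMod n) : ⟪v, ρ (.ofAdd j) x⟫_ℂ = ⟪v, x⟫_ℂ := by
    rw [← (ρ (.ofAdd j)).inner_map_map v x, hv]
  simp only [fourierComponent, zero_mul, neg_zero, AddChar.map_zero_eq_one, one_smul,
    inner_smul_right, inner_sum, h, sum_const, card_univ, ZMod.card, nsmul_eq_mul]
  exact inv_mul_cancel_left₀ (Nat.cast_ne_zero.mpr (NeZero.ne n)) _

lemma fourierComponent_zero_eq_zero {x : H} (hx : ∀ v, (∀ g, ρ g v = v) → ⟪v, x⟫_ℂ = 0) :
    fourierComponent ρ x 0 = 0 := by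
  have hinv := map_fourierComponent_zero ρ x
  rw [← inner_self_eq_zero (𝕜 := ℂ), inner_fourierComponent_zero_right ρ hinv, hx _ hinv]

lemma re_inner_map_ofAdd_one_le {x : H} (hx : ∀ v, (∀ g, ρ g v = v) → ⟪v, x⟫_ℂ = 0) :
    re ⟪x, ρ (.ofAdd 1) x⟫_ℂ ≤ Real.cos (2 * π / n) * ‖x‖ ^ 2 := by
  set c := fourierComponent ρ x
  have hc : Pairwise fun k l => ⟪c k, c l⟫_ℂ = 0 := fun k l => inner_fourierComponent_eq_zero ρ x
  have hx_eq : x = ∑ k, c k := (sum_fourierComponent ρ x).symm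
  have hρx : ρ (.ofAdd 1) x = ∑ k, stdAddChar k • c k := by
    conv_lhs => rw [hx_eq]
    simp only [map_sum, c, map_fourierComponent, mul_one]
  have hnorm : ‖x‖ ^ 2 = ∑ k, ‖c k‖ ^ 2 := by
    have h := congrArg re (inner_sum_sum_smul_of_pairwise hc 1)
    simpa [← hx_eq, re_sum, ← ofReal_pow] using h
  rw [hρx, hx_eq, inner_sum_sum_smul_of_pairwise hc, ← hx_eq, hnorm, mul_sum, re_sum]
  refine sum_le_sum fun k _ => ?_
  rw [re_mul_ofReal]
  rcases eq_or_ne k 0 with rfl | hk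
  · simp [c, fourierComponent_zero_eq_zero ρ hx]
  · exact mul_le_mul_of_nonneg_right (ZMod.re_stdAddChar_le hk) (sq_nonneg _)

end FourierComponent

namespace DihedralGroup

def rotations (n : ℕ) : Multiplicative (ZMod n) →* DihedralGroup n where
  toFun j := r j.toAdd
  map_one' := rfl
  map_mul' _ _ := (r_mul_r _ _).symm

section UnitaryRep

variable {n : ℕ} {H : Type*} [NormedAddCommGroup H] [InnerProductSpace ℂ H]
  (ρ : DihedralGroup n →* (H ≃ₗᵢ[ℂ] H))

lemma map_sr_apply (i : ZMod n) (x : H) : ρ (sr i) x = ρ (sr 0) (ρ (r i) x) := by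
  rw [← LinearIsometryEquiv.mul_apply, ← map_mul, sr_mul_r, zero_add]

lemma map_sr_map_sr (i : ZMod n) (x : H) : ρ (sr i) (ρ (sr i) x) = x := by
  rw [← LinearIsometryEquiv.mul_apply, ← map_mul, sr_mul_self, map_one,
    LinearIsometryEquiv.coe_one, id]

lemma inner_map_sr_left (i : ZMod n) (x y : H) :
    ⟪ρ (sr i) x, y⟫_ℂ = ⟪x, ρ (sr i) y⟫_ℂ := by
  rw [LinearIsometryEquiv.inner_map_eq_flip, ← LinearIsometryEquiv.coe_inv, ← map_inv, inv_sr]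

variable {ρ}

lemma map_sr_eq_neg_of_forall_map_r_eq (hρ : ∀ v, (∀ g, ρ g v = v) → v = 0) {v : H}
    (hv : ∀ i, ρ (r i) v = v) (i : ZMod n) : ρ (sr i) v = -v := by
  set w := v + ρ (sr 0) v
  have hw_r (j : ZMod n) : ρ (r j) w = w := by
    rw [map_add, hv, ← LinearIsometryEquiv.mul_apply, ← map_mul, r_mul_sr, map_sr_apply, hv]
  have hw : w = 0 := hρ w fun
    | r j => hw_r j
    | sr j => by rw [map_sr_apply, hw_r, map_add, map_sr_map_sr, add_comm]
  rw [map_sr_apply, hv, eq_neg_iff_add_eq_zero, add_comm]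
  exact hw

lemma norm_map_sr_zero_add_map_sr_one_le (hn : 2 ≤ n) {x : H}
    (hx : ∀ v, (∀ i, ρ (r i) v = v) → ⟪v, x⟫_ℂ = 0) :
    ‖ρ (sr 0) x + ρ (sr 1) x‖ ≤ 2 * Real.cos (π / n) * ‖x‖ := by
  have : NeZero n := ⟨by omega⟩
  have hU : re ⟪x, ρ (r 1) x⟫_ℂ ≤ Real.cos (2 * π / n) * ‖x‖ ^ 2 :=
    re_inner_map_ofAdd_one_le (ρ.comp (rotations n)) fun v hv => hx v fun i => hv (.ofAdd i)
  have hcos : 0 ≤ Real.cos (π / n) := by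
    have hπn : 0 ≤ π / n := by positivity
    refine Real.cos_nonneg_of_mem_Icc ⟨by linarith [pi_pos], ?_⟩
    rw [div_le_div_iff₀ (by positivity) two_pos]
    exact mul_le_mul_of_nonneg_left (by exact_mod_cast hn) pi_pos.le
  have hdouble : Real.cos (2 * π / n) = 2 * Real.cos (π / n) ^ 2 - 1 := by
    rw [mul_div_assoc, Real.cos_two_mul]
  refine (pow_le_pow_iff_left₀ (norm_nonneg _) (by positivity) two_ne_zero).mp ?_
  rw [@norm_add_sq ℂ, LinearIsometryEquiv.norm_map, LinearIsometryEquiv.norm_map,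
    map_sr_apply ρ 1, LinearIsometryEquiv.inner_map_map]
  change ‖x‖ ^ 2 + 2 * re ⟪x, ρ (r 1) x⟫_ℂ + ‖x‖ ^ 2 ≤ _
  nlinarith

lemma re_inner_map_sr_zero_add_re_inner_map_sr_one_le (hn : 2 ≤ n)
    (hρ : ∀ v, (∀ g, ρ g v = v) → v = 0) (ξ : H) :
    re ⟪ρ (sr 0) ξ, ξ⟫_ℂ + re ⟪ρ (sr 1) ξ, ξ⟫_ℂ ≤ 2 * Real.cos (π / n) * ‖ξ‖ ^ 2 := by
  have : NeZero n := ⟨by omega⟩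
  set c := fourierComponent (ρ.comp (rotations n)) ξ 0
  set x := ξ - c
  have hc (i : ZMod n) : ρ (r i) c = c :=
    map_fourierComponent_zero (ρ.comp (rotations n)) ξ (.ofAdd i)
  have hx (v : H) (hv : ∀ i, ρ (r i) v = v) : ⟪v, x⟫_ℂ = 0 := by
    rw [inner_sub_right,
      inner_fourierComponent_zero_right (ρ.comp (rotations n)) (fun g => hv g.toAdd), sub_self]
  have hcx : ⟪c, x⟫_ℂ = 0 := hx c hc
  have hξ : ξ = c + x := (add_sub_cancel c ξ).symm
  have hsr (i : ZMod n) : re ⟪ρ (sr i) ξ, ξ⟫_ℂ = -‖c‖ ^ 2 + re ⟪ρ (sr i) x, x⟫_ℂ := by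
    have hsrc : ρ (sr i) c = -c := map_sr_eq_neg_of_forall_map_r_eq hρ hc i
    have hxc : ⟪ρ (sr i) x, c⟫_ℂ = 0 := by
      rw [inner_map_sr_left, hsrc, inner_neg_right, ← inner_conj_symm, hcx, map_zero, neg_zero]
    rw [hξ, map_add, hsrc]
    simp only [inner_add_left, inner_add_right, inner_neg_left, hcx, hxc, add_re, neg_re,
      inner_self_eq_norm_sq_to_K]
    simp [← ofReal_pow]
  have hsum : re ⟪ρ (sr 0) x + ρ (sr 1) x, x⟫_ℂ ≤ 2 * Real.cos (π / n) * ‖x‖ ^ 2 := by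
    calc _ ≤ ‖ρ (sr 0) x + ρ (sr 1) x‖ * ‖x‖ := re_inner_le_norm (𝕜 := ℂ) _ _
      _ ≤ 2 * Real.cos (π / n) * ‖x‖ * ‖x‖ := by
        gcongr; exact norm_map_sr_zero_add_map_sr_one_le hn hx
      _ = _ := by ring
  have hpyth : ‖ξ‖ * ‖ξ‖ = ‖c‖ * ‖c‖ + ‖x‖ * ‖x‖ := by
    rw [hξ]
    exact norm_add_sq_eq_norm_sq_add_norm_sq_of_inner_eq_zero c x hcx
  rw [hsr, hsr]
  rw [inner_add_left, add_re] at hsum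
  nlinarith [Real.neg_one_le_cos (π / n), sq_nonneg ‖c‖]

lemma two_mul_sin_le_max_norm_map_sr_sub (hn : 2 ≤ n) (hρ : ∀ v, (∀ g, ρ g v = v) → v = 0)
    {ξ : H} (hξ : ‖ξ‖ = 1) :
    2 * Real.sin (π / (2 * n)) ≤ max ‖ρ (sr 0) ξ - ξ‖ ‖ρ (sr 1) ξ - ξ‖ := by
  have hre := re_inner_map_sr_zero_add_re_inner_map_sr_one_le hn hρ ξ
  have hnorm (i : ZMod n) : ‖ρ (sr i) ξ - ξ‖ ^ 2 = 2 - 2 * re ⟪ρ (sr i) ξ, ξ⟫_ℂ := by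
    rw [@norm_sub_sq ℂ, LinearIsometryEquiv.norm_map, hξ]
    change 1 ^ 2 - 2 * re ⟪ρ (sr i) ξ, ξ⟫_ℂ + 1 ^ 2 = _
    ring
  have hcos : Real.cos (π / n) = 1 - 2 * Real.sin (π / (2 * n)) ^ 2 := by
    rw [show π / n = 2 * (π / (2 * n)) by field_simp, Real.cos_two_mul, Real.cos_sq']
    ring
  have hsin := Real.sin_pi_div_two_mul_nonneg n
  by_contra! hlt
  have h0 := (le_max_left _ _).trans_lt hlt
  have h1 := (le_max_right _ _).trans_lt hlt
  rw [hξ, one_pow, mul_one, hcos] at hre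
  nlinarith [hnorm 0, hnorm 1, norm_nonneg (ρ (sr 0) ξ - ξ), norm_nonneg (ρ (sr 1) ξ - ξ)]

end UnitaryRep

section StandardRep

variable {n : ℕ} [NeZero n]

noncomputable def standardAct :
    DihedralGroup n → EuclideanSpace ℂ (Fin 2) → EuclideanSpace ℂ (Fin 2)
  | r j, v => !₂[stdAddChar j * v 0, stdAddChar (-j) * v 1]
  | sr j, v => !₂[stdAddChar (-j) * v 1, stdAddChar j * v 0]

lemma standardAct_mul (g h : DihedralGroup n) (v : EuclideanSpace ℂ (Fin 2)) :
    standardAct (g * h) v = standardAct g (standardAct h v) := by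
  cases g <;> cases h <;>
  · ext k; fin_cases k <;>
    · simp only [standardAct, r_mul_r, r_mul_sr, sr_mul_r, sr_mul_sr, sub_eq_add_neg, neg_add_rev,
        neg_neg, AddChar.map_add_eq_mul, AddChar.map_neg_eq_inv, Fin.isValue, Fin.zero_eta,
        Fin.mk_one, Matrix.cons_val_zero, Matrix.cons_val_one, Matrix.cons_val_fin_one]
      ring

lemma standardAct_one (v : EuclideanSpace ℂ (Fin 2)) : standardAct (1 : DihedralGroup n) v = v := by
  rw [one_def]; ext k; fin_cases k <;> simp [standardAct]

lemma norm_standardAct (g : DihedralGroup n) (v : EuclideanSpace ℂ (Fin 2)) :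
    ‖standardAct g v‖ = ‖v‖ := by
  cases g <;> simp [standardAct, EuclideanSpace.norm_eq, add_comm]

noncomputable def standardRep (n : ℕ) [NeZero n] :
    DihedralGroup n →* (EuclideanSpace ℂ (Fin 2) ≃ₗᵢ[ℂ] EuclideanSpace ℂ (Fin 2)) where
  toFun g :=
    { toFun := standardAct g
      invFun := standardAct g⁻¹
      map_add' v w := by cases g <;> ext k <;> fin_cases k <;> simp [standardAct, mul_add]
      map_smul' c v := by cases g <;> ext k <;> fin_cases k <;> simp [standardAct, mul_left_comm]
      left_inv v := by simp [← standardAct_mul, standardAct_one]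
      right_inv v := by simp [← standardAct_mul, standardAct_one]
      norm_map' := norm_standardAct g }
  map_one' := LinearIsometryEquiv.ext standardAct_one
  map_mul' g h := LinearIsometryEquiv.ext (standardAct_mul g h)

lemma standardRep_apply (g : DihedralGroup n) (v : EuclideanSpace ℂ (Fin 2)) :
    standardRep n g v = standardAct g v :=
  rfl

lemma eq_zero_of_forall_standardRep_apply_eq (hn : 2 ≤ n) {v : EuclideanSpace ℂ (Fin 2)}
    (hv : ∀ g, standardRep n g v = v) : v = 0 := by
  have : Fact (1 < n) := ⟨hn⟩
  have h_fixed {j : ZMod n} (hj : j ≠ 0) {z : ℂ} (hz : stdAddChar j * z = z) : z = 0 := by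
    by_contra hz0
    rw [mul_eq_right₀ hz0, ← AddChar.map_zero_eq_one (stdAddChar (N := n)),
      ZMod.injective_stdAddChar.eq_iff] at hz
    exact hj hz
  have h := hv (r 1)
  rw [standardRep_apply, standardAct, WithLp.ext_iff] at h
  ext k; fin_cases k
  · exact h_fixed one_ne_zero (congrFun h 0)
  · exact h_fixed (neg_ne_zero.mpr one_ne_zero) (congrFun h 1)

noncomputable def testVector (w : ℂ) : EuclideanSpace ℂ (Fin 2) :=
  ((√2)⁻¹ : ℂ) • !₂[1, w]

lemma norm_testVector {w : ℂ} (hw : ‖w‖ = 1) : ‖testVector w‖ = 1 := by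
  simp only [testVector, norm_smul, norm_inv, norm_real, norm_eq_abs, EuclideanSpace.norm_eq,
    Fin.sum_univ_two, Fin.isValue, Matrix.cons_val_zero, Matrix.cons_val_one,
    Matrix.cons_val_fin_one, norm_one, one_pow, hw, one_add_one_eq_two]
  rw [abs_of_nonneg (Real.sqrt_nonneg 2), inv_mul_cancel₀ (by positivity)]

lemma norm_standardRep_sr_testVector_sub (w : ℂ) (j : ZMod n) :
    ‖standardRep n (sr j) (testVector w) - testVector w‖ = ‖stdAddChar (-j) * w - 1‖ := by
  set a : ℂ := (√2)⁻¹
  have h : stdAddChar j * stdAddChar (-j) = 1 := by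
    rw [← AddChar.map_add_eq_mul, add_neg_cancel, AddChar.map_zero_eq_one]
  have e0 : stdAddChar (-j) * (a * w) - a * 1 = a * (stdAddChar (-j) * w - 1) := by ring
  have e1 : stdAddChar j * (a * 1) - a * w = -a * stdAddChar j * (stdAddChar (-j) * w - 1) := by
    linear_combination a * w * h
  have ha : ‖a‖ ^ 2 = 2⁻¹ := by simp [a]
  simp only [EuclideanSpace.norm_eq, standardRep_apply, standardAct, testVector, Fin.sum_univ_two,
    PiLp.sub_apply, PiLp.smul_apply, smul_eq_mul, Matrix.cons_val_zero, Matrix.cons_val_one]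
  rw [e0, e1, norm_mul, norm_mul, norm_mul, norm_neg, AddChar.norm_apply, mul_one, mul_pow, ha,
    ← two_mul, ← mul_assoc, mul_inv_cancel₀ two_ne_zero, one_mul, Real.sqrt_sq (norm_nonneg _)]

lemma norm_standardRep_sr_testVector_exp_sub {i : ZMod n} (hi : i = 0 ∨ i = 1) :
    ‖standardRep n (sr i) (testVector (exp (I * (π / n : ℝ))))
        - testVector (exp (I * (π / n : ℝ)))‖ = 2 * Real.sin (π / (2 * n)) := by
  rw [norm_standardRep_sr_testVector_sub]
  rcases hi with rfl | rfl
  · rw [neg_zero, AddChar.map_zero_eq_one, one_mul]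
    exact Complex.norm_exp_I_mul_sub_one_of_abs_eq (abs_of_nonneg (by positivity))
  · have : stdAddChar (-1 : ZMod n) * exp (I * (π / n : ℝ)) = exp (I * (-(π / n) : ℝ)) := by
      rw [← Int.cast_one, ← Int.cast_neg, ZMod.stdAddChar_coe, ← Complex.exp_add]
      congr 1
      push_cast
      field_simp
      ring
    rw [this]
    exact Complex.norm_exp_I_mul_sub_one_of_abs_eq (by rw [abs_neg, abs_of_nonneg (by positivity)])

end StandardRep

end DihedralGroup

lemma Real.biSup_pair_of_nonneg {α : Type*} {f : α → ℝ} (hf : ∀ x, 0 ≤ f x) (a b : α) :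
    ⨆ x ∈ ({a, b} : Set α), f x = max (f a) (f b) := by
  rw [← csSup_image (Set.finite_range _).bddAbove (by simpa using Real.iSup_nonneg fun _ => hf _),
    Set.image_pair, csSup_pair]

/-- For the dihedral group `I₂(n)` of order `2n` (`n ≥ 3`) with its two
standard Coxeter generators `s, t`, the Kazhdan constant is
`κ(I₂(n), {s,t}) = 2 sin(π/(2n))`. -/
theorem kazhdan_dihedral (n : ℕ) (hn : 3 ≤ n) :
    kazhdanConstant (DihedralGroup n)
        {DihedralGroup.sr (0 : ZMod n), DihedralGroup.sr (1 : ZMod n)}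
      = 2 * Real.sin (Real.pi / (2 * n)) := by
  have : NeZero n := ⟨by omega⟩
  refine IsLeast.csInf_eq ⟨?_, ?_⟩
  · refine ⟨_, _, _, standardRep n, fun _ => eq_zero_of_forall_standardRep_apply_eq (by omega),
      testVector (exp (I * (π / n : ℝ))), norm_testVector (norm_exp_I_mul_ofReal _), ?_⟩
    rw [Real.biSup_pair_of_nonneg (fun _ => norm_nonneg _),
      norm_standardRep_sr_testVector_exp_sub (.inl rfl),
      norm_standardRep_sr_testVector_exp_sub (.inr rfl), max_self]
  · rintro _ ⟨H, _, _, ρ, hρ, ξ, hξ, rfl⟩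
    rw [Real.biSup_pair_of_nonneg (fun _ => norm_nonneg _)]
    exact two_mul_sin_le_max_norm_map_sr_sub (by omega) hρ hξ
end
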